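/- arXiv:2412.08436 — 3 statements merged into one kernel-verified Lean document; each statement's English description precedes it below -/
import Mathlib

section
/- Let d, k, d₁, d₂ be integers and n : ℕ → ℕ a finitely supported function. Set f_i = ∑_{r≥2} r^i * n r. Assume: (1) d₁ + d₂ = 2k + d - 1; (2) the Tjurina number τ = ∑_{r≥2} (r-1)² * n r satisfies τ = (2k+d-1)² - d₁*(2k+d-d₁-1); and (3) the combinatorial count 4*(k choose 2) + 2*k*d + (d choose 2) = ∑_{r≥2} (r choose 2) * n r holds. Then ∑_{r≥2} (r-1) * n r - d + 1 = d₁ * d₂. -/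
open Finset

lemma two_mul_choose_two (r : ℕ) : 2 * r.choose 2 = r * (r - 1) := by
  induction r with
  | zero => rfl
  | succ m ih =>
    rw [Nat.choose_succ_succ, Nat.choose_one_right, Nat.mul_add, ih]
    cases m with
    | zero => rfl
    | succ j => simp [Nat.succ_sub_one]; ring

theorem stmt_1 (d k d₁ d₂ : ℤ) (n : ℕ →₀ ℕ)
    (hlow : ∀ r < 2, n r = 0)
    (hexp : d₁ + d₂ = 2 * k + d - 1)
    (hτ : ∑ r ∈ n.support, ((r : ℤ) - 1) ^ 2 * n r
      = (2 * k + d - 1) ^ 2 - d₁ * (2 * k + d - d₁ - 1))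
    (hcount : 4 * (k * (k - 1) / 2) + 2 * k * d + d * (d - 1) / 2
      = ∑ r ∈ n.support, ((Nat.choose r 2 : ℤ)) * n r) :
    (∑ r ∈ n.support, ((r : ℤ) - 1) * n r) - d + 1 = d₁ * d₂ := by
  have ha : 2 * (k * (k - 1) / 2) = k * (k - 1) := by
    apply Int.mul_ediv_cancel'
    have := Int.even_mul_succ_self (k - 1)
    simpa [sub_add_cancel, mul_comm] using this.two_dvd
  have hb : 2 * (d * (d - 1) / 2) = d * (d - 1) := by
    apply Int.mul_ediv_cancel'
    have := Int.even_mul_succ_self (d - 1)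
    simpa [sub_add_cancel, mul_comm] using this.two_dvd
  have hsum : ∑ r ∈ n.support, ((r : ℤ) - 1) * n r
      = 2 * ∑ r ∈ n.support, ((Nat.choose r 2 : ℤ)) * n r
        - ∑ r ∈ n.support, ((r : ℤ) - 1) ^ 2 * n r := by
    rw [mul_sum, ← Finset.sum_sub_distrib]
    refine Finset.sum_congr rfl fun r hr => ?_
    have h2 : 2 ≤ r := by
      by_contra h
      exact (Finsupp.mem_support_iff.mp hr) (hlow r (by omega))
    have hc : (2 : ℤ) * (r.choose 2 : ℤ) = r * (r - 1) := by
      have := two_mul_choose_two r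
      have : ((2 * r.choose 2 : ℕ) : ℤ) = ((r * (r - 1) : ℕ) : ℤ) := by rw [this]
      push_cast [Nat.cast_sub (by omega : 1 ≤ r)] at this
      linarith
    nlinarith [hc, sq_nonneg ((r : ℤ) - 1)]
  rw [hsum, ← hcount, hτ]
  have hd₂ : d₂ = 2 * k + d - 1 - d₁ := by linarith
  rw [hd₂]
  nlinarith [ha, hb]
end

section
/- Under hypotheses (1)–(3) of the previous context (k, d₁, d₂ integers, n₂, n₃, n₄, t₃, t₅, t₇ naturals with d₁+d₂ = 2k-1, τ = (2k-1)² - d₁d₂ where τ = n₂+4n₃+9n₄+3t₃+5t₅+7t₇, and 4(k choose 2) = n₂+3n₃+6n₄+2t₃+3t₅+4t₇), the polynomial 1 + (2k-1)t + (n₂+2n₃+3n₄+t₃+t₅+t₇+1)t² factors in ℚ[t] as (1+d₁t)(1+d₂t). -/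
open Polynomial

theorem stmt_7 (k d₁ d₂ : ℤ) (n₂ n₃ n₄ t₃ t₅ t₇ : ℕ)
    (hexp : d₁ + d₂ = 2 * k - 1)
    (hτ : (n₂ : ℤ) + 4 * n₃ + 9 * n₄ + 3 * t₃ + 5 * t₅ + 7 * t₇
      = (2 * k - 1) ^ 2 - d₁ * d₂)
    (hcount : 4 * (k * (k - 1) / 2)
      = (n₂ : ℤ) + 3 * n₃ + 6 * n₄ + 2 * t₃ + 3 * t₅ + 4 * t₇) :
    (1 + C ((2 * k - 1 : ℤ) : ℚ) * X
       + C ((n₂ : ℚ) + 2 * n₃ + 3 * n₄ + t₃ + t₅ + t₇ + 1) * X ^ 2 : ℚ[X])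
      = (1 + C ((d₁ : ℚ)) * X) * (1 + C ((d₂ : ℚ)) * X) := by
  have heven : (2 : ℤ) ∣ k * (k - 1) := by
    rcases Int.even_or_odd k with h | h <;> rcases h with ⟨m, hm⟩ <;> subst hm
    · exact ⟨m * (2 * m - 1), by ring⟩
    · exact ⟨(2 * m + 1) * m, by ring⟩
  obtain ⟨m, hm⟩ := heven
  rw [hm] at hcount
  have hcount' : 2 * (k * (k - 1)) = (n₂ : ℤ) + 3 * n₃ + 6 * n₄ + 2 * t₃ + 3 * t₅ + 4 * t₇ := by
    rw [hm]; omega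
  have key : (n₂ : ℤ) + 2 * n₃ + 3 * n₄ + t₃ + t₅ + t₇ + 1 = d₁ * d₂ := by
    linear_combination -hτ - 2 * hcount'
  have hc : ((n₂ : ℚ) + 2 * n₃ + 3 * n₄ + t₃ + t₅ + t₇ + 1) = (d₁ : ℚ) * d₂ := by
    exact_mod_cast congrArg (fun z : ℤ => (z : ℚ)) key
  have he : ((2 * k - 1 : ℤ) : ℚ) = (d₁ : ℚ) + d₂ := by exact_mod_cast hexp.symm
  rw [hc, he, map_mul, map_add]
  ring
end

section
/- Let d, k, d₁ be integers with d ≥ 2, k ≥ 2 and let n : ℕ → ℕ be finitely supported. Set f_i = ∑_{r≥2} r^i * n r. Assume: (1) f_2 - 2*f_1 + f_0 = (dk-1)² + d₁² - d₁*(dk-1) (freeness/du Plessis–Wall with total Tjurina number ∑(r-1)²n_r); and (2) d²*(k² - k) = f_2 - f_1 (combinatorial count of pairwise intersections). Then ∑_{r≥2} (r² - 5r + 4)*n r ≥ 3 + 3*d*k*(d-2). -/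
open Finset

theorem stmt_10 (d k d₁ : ℤ) (hd : 2 ≤ d) (hk : 2 ≤ k) (n : ℕ →₀ ℕ)
    (hlow : ∀ r < 2, n r = 0)
    (hfree : (∑ r ∈ n.support, (r : ℤ) ^ 2 * n r)
        - 2 * (∑ r ∈ n.support, (r : ℤ) * n r)
        + (∑ r ∈ n.support, (n r : ℤ))
      = (d * k - 1) ^ 2 + d₁ ^ 2 - d₁ * (d * k - 1))
    (hcount : d ^ 2 * (k ^ 2 - k)
      = (∑ r ∈ n.support, (r : ℤ) ^ 2 * n r) - (∑ r ∈ n.support, (r : ℤ) * n r)) :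
    ∑ r ∈ n.support, ((r : ℤ) ^ 2 - 5 * r + 4) * n r ≥ 3 + 3 * d * k * (d - 2) := by
  have hsplit : ∑ r ∈ n.support, ((r : ℤ) ^ 2 - 5 * r + 4) * n r
      = (∑ r ∈ n.support, (r : ℤ) ^ 2 * n r)
        - 5 * (∑ r ∈ n.support, (r : ℤ) * n r)
        + 4 * (∑ r ∈ n.support, (n r : ℤ)) := by
    rw [Finset.mul_sum, Finset.mul_sum, ← Finset.sum_sub_distrib, ← Finset.sum_add_distrib]
    apply Finset.sum_congr rfl
    intro r _
    ring
  rw [hsplit]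
  nlinarith [sq_nonneg (2 * d₁ - (d * k - 1))]
end
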